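/- arXiv:2403.08465 — 5 statements merged into one kernel-verified Lean document; each statement's English description precedes it below -/
import Mathlib

section
/- Let G be a graph of order n with minimum degree δ ≥ 1. If σ₂(G) ≥ n/δ + δ − 1, then π₂(G) ≥ n − δ. -/
/-- Let `G` be a graph of order `n` with minimum degree `δ ≥ 1`.
If `σ₂(G) ≥ n/δ + δ − 1` (i.e. every pair of distinct non-adjacent vertices has degree
sum at least `n/δ + δ − 1`), then `π₂(G) ≥ n − δ` (every pair of distinct non-adjacent
vertices has degree product at least `n − δ`). -/
theorem stmt0 {V : Type*} [Fintype V] [Nonempty V] (G : SimpleGraph V) [DecidableRel G.Adj]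
    (hδ : 1 ≤ G.minDegree)
    (hσ : ∀ u v : V, u ≠ v → ¬ G.Adj u v →
      (Fintype.card V : ℝ) / (G.minDegree : ℝ) + (G.minDegree : ℝ) - 1
        ≤ (G.degree u : ℝ) + (G.degree v : ℝ)) :
    ∀ u v : V, u ≠ v → ¬ G.Adj u v →
      Fintype.card V - G.minDegree ≤ G.degree u * G.degree v := by
  intro u v huv hadj
  have hδpos : (0:ℝ) < (G.minDegree : ℝ) := by exact_mod_cast hδ
  have ha : (G.minDegree : ℝ) ≤ (G.degree u : ℝ) := by
    exact_mod_cast G.minDegree_le_degree u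
  have hb : (G.minDegree : ℝ) ≤ (G.degree v : ℝ) := by
    exact_mod_cast G.minDegree_le_degree v
  have hs := hσ u v huv hadj
  have hmul : (G.minDegree : ℝ) * ((Fintype.card V : ℝ) / (G.minDegree : ℝ))
      = (Fintype.card V : ℝ) := mul_div_cancel₀ _ (ne_of_gt hδpos)
  have key : (Fintype.card V : ℝ) ≤ (G.degree u : ℝ) * (G.degree v : ℝ) + G.minDegree := by
    nlinarith [mul_nonneg (sub_nonneg.2 ha) (sub_nonneg.2 hb)]
  have knat : Fintype.card V ≤ G.degree u * G.degree v + G.minDegree := by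
    exact_mod_cast key
  omega
end

section
/- Let G be a connected graph of order n with σ*(G) ≥ n. Then for every vertex u of G, u has a neighbor that is not a cut-vertex of G. -/
/-- `I` is an independent set of `G`. -/
def IsIndep {V : Type*} (G : SimpleGraph V) (I : Finset V) : Prop :=
  ∀ u ∈ I, ∀ v ∈ I, u ≠ v → ¬ G.Adj u v

/-- `I` is a large independent set: `|I| ≥ δ_G(I) + 1`. -/
def IsLarge {V : Type*} [Fintype V] (G : SimpleGraph V) [DecidableRel G.Adj]
    (I : Finset V) : Prop :=
  ∃ u ∈ I, G.degree u + 1 ≤ I.card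

/-- `v` is a cut-vertex of the connected graph `G`: removing `v` disconnects `G`. -/
def IsCutVertex {V : Type*} (G : SimpleGraph V) (v : V) : Prop :=
  ¬ (G.induce {u : V | u ≠ v}).Connected

/-!
Suppose every neighbour `c` of `u` is a cut-vertex. Then `G - c` has a component `D_c` avoiding
`u`; pick `y_c ∈ D_c`. Since `G` is connected and the `c` are distinct neighbours of `u`, the
sets `D_c` are pairwise disjoint and miss `N[u]`, so `∑ |D_c| ≤ n - d(u) - 1`. All neighbours of
`y_c` lie in `D_c ∪ {c}`, whence `d(y_c) ≤ |D_c|`. The set `{u} ∪ {y_c}` is independent of size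
`d(u) + 1`, hence large, and its degree sum is at most `n - 1`, contradicting `σ*(G) ≥ n`.
-/

namespace SimpleGraph

variable {V : Type*} {G : SimpleGraph V} {c c' u x y : V}

def Separates (G : SimpleGraph V) (c x u : V) : Prop :=
  ∃ (hx : x ≠ c) (hu : u ≠ c), ¬ (G.induce {v | v ≠ c}).Reachable ⟨x, hx⟩ ⟨u, hu⟩

lemma Separates.of_adj (h : G.Separates c x u) (hxy : G.Adj x y) (hy : y ≠ c) :
    G.Separates c y u := by
  obtain ⟨hx, hu, hxu⟩ := h
  refine ⟨hy, hu, fun hyu => hxu ?_⟩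
  have hxy' : (G.induce {v | v ≠ c}).Adj ⟨x, hx⟩ ⟨y, hy⟩ := by simpa using hxy
  exact hxy'.reachable.trans hyu

lemma not_separates_of_adj (hxu : G.Adj x u) : ¬ G.Separates c x u := by
  rintro ⟨hx, hu, hr⟩
  have hxu' : (G.induce {v | v ≠ c}).Adj ⟨x, hx⟩ ⟨u, hu⟩ := by simpa using hxu
  exact hr hxu'.reachable

lemma not_separates_self : ¬ G.Separates c u u :=
  fun ⟨_, _, hr⟩ => hr .rfl

lemma _root_.IsCutVertex.exists_separates (hc : IsCutVertex G c) (hu : u ≠ c) :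
    ∃ x, G.Separates c x u := by
  have : Nonempty {v | v ≠ c} := ⟨⟨u, hu⟩⟩
  have hpre : ¬ (G.induce {v | v ≠ c}).Preconnected := fun hp => hc ⟨hp⟩
  simp only [Preconnected, not_forall] at hpre
  obtain ⟨a, b, hab⟩ := hpre
  by_cases ha : (G.induce {v | v ≠ c}).Reachable a ⟨u, hu⟩
  · exact ⟨b, b.2, hu, fun hb => hab (ha.trans hb.symm)⟩
  · exact ⟨a, a.2, hu, ha⟩

/-- Whichever of the neighbours `c`, `c'` of `u` the walk meets first is joined to `u` in `G`
minus the other one. -/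
lemma Walk.not_separates_of_separates (p : G.Walk x u) (hc : G.Adj u c) (hc' : G.Adj u c')
    (hcc' : c ≠ c') (h : G.Separates c x u) : ¬ G.Separates c' x u := by
  induction p with
  | nil => exact fun _ => not_separates_self h
  | @cons a b u hab p ih =>
    intro h'
    by_cases hbc : b = c
    · subst hbc
      exact not_separates_of_adj hc.symm (h'.of_adj hab hcc')
    by_cases hbc' : b = c'
    · subst hbc'
      exact not_separates_of_adj hc'.symm (h.of_adj hab (Ne.symm hcc'))
    exact ih hc hc' (h.of_adj hab hbc) (h'.of_adj hab hbc')

lemma Connected.eq_of_separates (hconn : G.Connected) (hc : G.Adj u c) (hc' : G.Adj u c')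
    (h : G.Separates c x u) (h' : G.Separates c' x u) : c = c' :=
  by_contra fun hcc' => (hconn.preconnected x u).some.not_separates_of_separates hc hc' hcc' h h'

section Counting

open Finset

variable [Fintype V]

open Classical in
noncomputable def separatedFinset (G : SimpleGraph V) (c u : V) : Finset V :=
  {x | G.Separates c x u}

@[simp]
lemma mem_separatedFinset : x ∈ G.separatedFinset c u ↔ G.Separates c x u := by
  simp [separatedFinset]

variable [DecidableRel G.Adj]

lemma Separates.degree_le_card (h : G.Separates c x u) :
    G.degree x ≤ #(G.separatedFinset c u) := by
  classical
  have hsub : G.neighborFinset x ⊆ insert c ((G.separatedFinset c u).erase x) := by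
    intro z hz
    rw [mem_neighborFinset] at hz
    by_cases hzc : z = c
    · simp [hzc]
    · simpa [hzc, hz.ne'] using h.of_adj hz hzc
  calc G.degree x = #(G.neighborFinset x) := (card_neighborFinset_eq_degree G x).symm
    _ ≤ #((G.separatedFinset c u).erase x) + 1 :=
      (card_le_card hsub).trans (card_insert_le _ _)
    _ = #(G.separatedFinset c u) := card_erase_add_one (mem_separatedFinset.2 h)

lemma Connected.sum_card_separatedFinset_add_le (hconn : G.Connected) (u : V) :
    ∑ c ∈ G.neighborFinset u, #(G.separatedFinset c u) + (G.degree u + 1) ≤ Fintype.card V := by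
  classical
  have hdisj : ∀ c ∈ G.neighborFinset u, ∀ c' ∈ G.neighborFinset u, c ≠ c' →
      Disjoint (G.separatedFinset c u) (G.separatedFinset c' u) := by
    intro c hc c' hc' hcc'
    rw [mem_neighborFinset] at hc hc'
    exact Finset.disjoint_left.2 fun x h h' =>
      hcc' (hconn.eq_of_separates hc hc' (mem_separatedFinset.1 h) (mem_separatedFinset.1 h'))
  have hcompl : Disjoint ((G.neighborFinset u).biUnion fun c => G.separatedFinset c u)
      (insert u (G.neighborFinset u)) := by
    simp only [Finset.disjoint_left, mem_biUnion, mem_separatedFinset, mem_insert, mem_neighborFinset]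
    rintro x ⟨c, -, h⟩ (rfl | hux)
    · exact not_separates_self h
    · exact not_separates_of_adj hux.symm h
  rw [← card_biUnion hdisj, ← card_neighborFinset_eq_degree,
    ← card_insert_of_notMem (notMem_neighborFinset_self G u), ← card_union_of_disjoint hcompl]
  exact card_le_univ _

lemma Connected.isIndep_insert_image [DecidableEq V] (hconn : G.Connected) {f : V → V}
    (hf : ∀ c, G.Adj u c → G.Separates c (f c) u) :
    IsIndep G (insert u ((G.neighborFinset u).image f)) := by
  have hfu : ∀ c, G.Adj u c → ¬ G.Adj (f c) u := fun c hc h => not_separates_of_adj h (hf c hc)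
  have hff : ∀ c c', G.Adj u c → G.Adj u c' → G.Adj (f c) (f c') → c = c' := by
    intro c c' hc hc' hadj
    by_cases hfc : f c' = c
    · exact absurd (hfc ▸ hf c' hc') (not_separates_of_adj hc.symm)
    · exact hconn.eq_of_separates hc hc' ((hf c hc).of_adj hadj hfc) (hf c' hc')
  intro a ha b hb hab
  simp only [mem_insert, mem_image, mem_neighborFinset] at ha hb
  rcases ha with rfl | ⟨c, hc, rfl⟩ <;> rcases hb with rfl | ⟨c', hc', rfl⟩
  · exact absurd rfl hab
  · exact fun h => hfu c' hc' h.symm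
  · exact hfu c hc
  · exact fun h => hab (congrArg f (hff c c' hc hc' h))

lemma Connected.exists_isIndep_isLarge_sum_degree_lt (hconn : G.Connected)
    (hu : ∀ c, G.Adj u c → IsCutVertex G c) :
    ∃ I : Finset V, IsIndep G I ∧ IsLarge G I ∧ ∑ v ∈ I, G.degree v < Fintype.card V := by
  classical
  choose! f hf using fun c (hc : G.Adj u c) => (hu c hc).exists_separates hc.ne
  have hinj : Set.InjOn f (G.neighborFinset u) := fun c hc c' hc' e => by
    rw [coe_neighborFinset] at hc hc'
    exact hconn.eq_of_separates hc hc' (hf c hc) (e ▸ hf c' hc')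
  have hnotmem : u ∉ (G.neighborFinset u).image f := by
    simp only [mem_image, mem_neighborFinset, not_exists, not_and]
    exact fun c hc e => not_separates_self (e ▸ hf c hc)
  refine ⟨insert u ((G.neighborFinset u).image f), hconn.isIndep_insert_image hf,
    ⟨u, mem_insert_self _ _, ?_⟩, ?_⟩
  · rw [card_insert_of_notMem hnotmem, card_image_of_injOn hinj, card_neighborFinset_eq_degree]
  · rw [sum_insert hnotmem, sum_image hinj]
    have hdeg : ∑ c ∈ G.neighborFinset u, G.degree (f c) ≤
        ∑ c ∈ G.neighborFinset u, #(G.separatedFinset c u) :=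
      sum_le_sum fun c hc => (hf c ((mem_neighborFinset G u c).1 hc)).degree_le_card
    have hsum := hconn.sum_card_separatedFinset_add_le u
    omega

end Counting

end SimpleGraph

theorem stmt9_general {V : Type*} [Fintype V] (G : SimpleGraph V) [DecidableRel G.Adj]
    (hconn : G.Connected)
    (hσ : ∀ I : Finset V, IsIndep G I → IsLarge G I →
      Fintype.card V ≤ ∑ u ∈ I, G.degree u) :
    ∀ u : V, ∃ w : V, G.Adj u w ∧ ¬ IsCutVertex G w := by
  intro u
  by_contra! hu
  obtain ⟨I, hI, hlarge, hlt⟩ := hconn.exists_isIndep_isLarge_sum_degree_lt hu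
  exact (hσ I hI hlarge).not_gt hlt

/-- Let `G` be a connected graph of order `n` with `σ*(G) ≥ n`.
Then every vertex `u` of `G` has a neighbour that is not a cut-vertex of `G`.
(As in the source, one may additionally assume `δ(G) ≥ 2` and that `G` has a
cut-vertex.) -/
theorem stmt9 {V : Type*} [Fintype V] (G : SimpleGraph V) [DecidableRel G.Adj]
    (hconn : G.Connected)
    (hσ : ∀ I : Finset V, IsIndep G I → IsLarge G I →
      Fintype.card V ≤ ∑ u ∈ I, G.degree u)
    (hδ : ∀ v : V, 2 ≤ G.degree v)
    (hcut : ∃ v : V, IsCutVertex G v) :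
    ∀ u : V, ∃ w : V, G.Adj u w ∧ ¬ IsCutVertex G w :=
  stmt9_general G hconn hσ
end

section
/- For integers 2 ≤ s ≤ t, the graph H_{s,t} has minimum degree 2 and π₂(H_{s,t}) = 2s; in particular, if s < t then π₂(H_{s,t}) < n − δ(H_{s,t}) where n = s + t + 2. -/
/-- Vertex type of the graph `H_{s,t}`: vertices `a`, `b`, `c₁`, `c₂`, the `s−1`
vertices of the complete graph `S₁` and the `t−1` vertices of `S₂`. -/
inductive HV (s t : ℕ) where
  | a | b | c1 | c2
  | s1 (i : Fin (s - 1))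
  | s2 (j : Fin (t - 1))
  deriving DecidableEq, Fintype

instance {s t : ℕ} : Nonempty (HV s t) := ⟨HV.a⟩

/-- Underlying edge relation for `H_{s,t}` (with `withAB = true`) and
`H_{s,t}⁻ = H_{s,t} − ab` (with `withAB = false`): `a` and `b` are joined to all of
`S₁ ∪ S₂`; `S₁` and `S₂` are complete (via `fromRel`, which only keeps pairs of
distinct vertices); and `a c₁`, `a c₂`, `c₁ c₂` are edges. -/
def hstRel (withAB : Bool) {s t : ℕ} : HV s t → HV s t → Bool
  | .a, .b => withAB
  | .a, .c1 => true
  | .a, .c2 => true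
  | .c1, .c2 => true
  | .a, .s1 _ => true
  | .a, .s2 _ => true
  | .b, .s1 _ => true
  | .b, .s2 _ => true
  | .s1 _, .s1 _ => true
  | .s2 _, .s2 _ => true
  | _, _ => false

/-- The graph `H_{s,t}` (if `withAB = true`) or `H_{s,t}⁻` (if `withAB = false`). -/
def Hst (s t : ℕ) (withAB : Bool) : SimpleGraph (HV s t) :=
  SimpleGraph.fromRel (fun x y => hstRel withAB x y = true)

instance {s t : ℕ} {w : Bool} : DecidableRel (Hst s t w).Adj :=
  fun x y => decidable_of_iff _ (SimpleGraph.fromRel_adj _ x y).symm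

lemma hst_adj {s t : ℕ} {w : Bool} (u v : HV s t) :
    (Hst s t w).Adj u v ↔ u ≠ v ∧ (hstRel w u v = true ∨ hstRel w v u = true) :=
  SimpleGraph.fromRel_adj _ u v

lemma hst_s1_inj {s t : ℕ} : Function.Injective (HV.s1 : Fin (s-1) → HV s t) :=
  fun i j h => by simpa using h

lemma hst_s2_inj {s t : ℕ} : Function.Injective (HV.s2 : Fin (t-1) → HV s t) :=
  fun i j h => by simpa using h

lemma deg_c1 {s t : ℕ} : (Hst s t true).degree .c1 = 2 := by
  have h : (Hst s t true).neighborFinset .c1 = {.a, .c2} := by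
    ext v
    rw [SimpleGraph.mem_neighborFinset, hst_adj]
    cases v <;> simp [hstRel]
  rw [SimpleGraph.degree, h, Finset.card_pair (by simp)]

lemma deg_c2 {s t : ℕ} : (Hst s t true).degree .c2 = 2 := by
  have h : (Hst s t true).neighborFinset .c2 = {.a, .c1} := by
    ext v
    rw [SimpleGraph.mem_neighborFinset, hst_adj]
    cases v <;> simp [hstRel]
  rw [SimpleGraph.degree, h, Finset.card_pair (by simp)]

lemma deg_s1 {s t : ℕ} (hs : 2 ≤ s) (i : Fin (s-1)) :
    (Hst s t true).degree (.s1 i) = s := by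
  have h : (Hst s t true).neighborFinset (.s1 i) =
      insert .a (insert .b ((Finset.univ.image HV.s1).erase (.s1 i))) := by
    ext v
    rw [SimpleGraph.mem_neighborFinset, hst_adj]
    cases v <;> simp [hstRel, eq_comm, and_comm]
  rw [SimpleGraph.degree, h]
  rw [Finset.card_insert_of_notMem (by simp), Finset.card_insert_of_notMem (by simp),
    Finset.card_erase_of_mem (by simp), Finset.card_image_of_injective _ hst_s1_inj,
    Finset.card_univ, Fintype.card_fin]
  omega

lemma deg_s2 {s t : ℕ} (ht : 2 ≤ t) (j : Fin (t-1)) :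
    (Hst s t true).degree (.s2 j) = t := by
  have h : (Hst s t true).neighborFinset (.s2 j) =
      insert .a (insert .b ((Finset.univ.image HV.s2).erase (.s2 j))) := by
    ext v
    rw [SimpleGraph.mem_neighborFinset, hst_adj]
    cases v <;> simp [hstRel, eq_comm, and_comm]
  rw [SimpleGraph.degree, h]
  rw [Finset.card_insert_of_notMem (by simp), Finset.card_insert_of_notMem (by simp),
    Finset.card_erase_of_mem (by simp), Finset.card_image_of_injective _ hst_s2_inj,
    Finset.card_univ, Fintype.card_fin]
  omega

lemma deg_a_ge {s t : ℕ} : 2 ≤ (Hst s t true).degree .a := by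
  have h : ({.b, .c1} : Finset (HV s t)) ⊆ (Hst s t true).neighborFinset .a := by
    intro v hv
    rw [SimpleGraph.mem_neighborFinset, hst_adj]
    simp only [Finset.mem_insert, Finset.mem_singleton] at hv
    rcases hv with rfl | rfl <;> simp [hstRel]
  calc 2 = ({.b, .c1} : Finset (HV s t)).card := (Finset.card_pair (by simp)).symm
    _ ≤ _ := Finset.card_le_card h

lemma deg_b_ge {s t : ℕ} (hs : 2 ≤ s) : s ≤ (Hst s t true).degree .b := by
  have h : insert HV.a (Finset.univ.image HV.s1) ⊆ (Hst s t true).neighborFinset (.b : HV s t) := by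
    intro v hv
    rw [SimpleGraph.mem_neighborFinset, hst_adj]
    simp only [Finset.mem_insert, Finset.mem_image] at hv
    rcases hv with rfl | ⟨i, -, rfl⟩ <;> simp [hstRel]
  have hc : (insert HV.a (Finset.univ.image HV.s1) : Finset (HV s t)).card = s := by
    rw [Finset.card_insert_of_notMem (by simp),
      Finset.card_image_of_injective _ hst_s1_inj, Finset.card_univ, Fintype.card_fin]
    omega
  calc s = _ := hc.symm
    _ ≤ _ := Finset.card_le_card h


/-- For integers `2 ≤ s ≤ t`, the graph `H_{s,t}` has minimum degree 2
and `π₂(H_{s,t}) = 2s`; in particular, if `s < t` then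
`π₂(H_{s,t}) < n − δ(H_{s,t})` where `n = s + t + 2`. -/
theorem stmt10 (s t : ℕ) (hs : 2 ≤ s) (hst : s ≤ t) :
    (Hst s t true).minDegree = 2 ∧
    (∀ u v : HV s t, u ≠ v → ¬ (Hst s t true).Adj u v →
      2 * s ≤ (Hst s t true).degree u * (Hst s t true).degree v) ∧
    (∃ u v : HV s t, u ≠ v ∧ ¬ (Hst s t true).Adj u v ∧
      (Hst s t true).degree u * (Hst s t true).degree v = 2 * s) ∧
    (s < t → 2 * s < (s + t + 2) - (Hst s t true).minDegree) := by
  have ht : 2 ≤ t := le_trans hs hst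
  have hmin : (Hst s t true).minDegree = 2 := by
    refine le_antisymm ?_ ?_
    · calc (Hst s t true).minDegree ≤ (Hst s t true).degree .c1 :=
        SimpleGraph.minDegree_le_degree _ _
      _ = 2 := deg_c1
    · refine SimpleGraph.le_minDegree_of_forall_le_degree _ 2 fun v => ?_
      cases v with
      | a => exact deg_a_ge
      | b => exact le_trans hs (deg_b_ge hs)
      | c1 => rw [deg_c1]
      | c2 => rw [deg_c2]
      | s1 i => rw [deg_s1 hs]; exact hs
      | s2 j => rw [deg_s2 ht]; exact ht
  refine ⟨hmin, ?_, ?_, ?_⟩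
  · intro u v huv hadj
    rw [hst_adj, not_and, not_or] at hadj
    have h2 := hadj huv
    have hb := deg_b_ge (s := s) (t := t) hs
    cases u <;> cases v <;>
      first
      | (rw [deg_c1, deg_s1 hs] <;> omega)
      | (rw [deg_s1 hs, deg_c1] <;> omega)
      | (rw [deg_c1, deg_s2 ht] <;> omega)
      | (rw [deg_s2 ht, deg_c1] <;> omega)
      | (rw [deg_c2, deg_s1 hs] <;> omega)
      | (rw [deg_s1 hs, deg_c2] <;> omega)
      | (rw [deg_c2, deg_s2 ht] <;> omega)
      | (rw [deg_s2 ht, deg_c2] <;> omega)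
      | (rw [deg_c1] <;> omega)
      | (rw [deg_c2] <;> omega)
      | (rw [deg_s1 hs, deg_s2 ht] <;> nlinarith)
      | (rw [deg_s2 ht, deg_s1 hs] <;> nlinarith)
      | simp [hstRel] at h2 huv
  · refine ⟨.c1, .s1 ⟨0, by omega⟩, by simp, ?_, ?_⟩
    · rw [hst_adj]; simp [hstRel]
    · rw [deg_c1, deg_s1 hs]
  · intro hlt
    rw [hmin]
    omega
end

section
/- Let n and d be positive integers with d(d+1)+1 < n, and let t₁, …, t_d be integers with Σ tᵢ = n−1 and each tᵢ ≥ d+1. Let G_t be the graph obtained from the disjoint union of complete graphs H₁, …, H_d of orders t₁, …, t_d by adding a new vertex u joined to exactly one vertex vᵢ of each Hᵢ. Then σ*(G_t) = n − 1. -/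
/-- Vertex type of the graph `G_t`: a new vertex `u` (`none`) together with the
disjoint union of the vertex sets of complete graphs `H₁, …, H_d` of orders
`t 0, …, t (d−1)` (`some ⟨i, j⟩` is the `j`-th vertex of `Hᵢ`). -/
abbrev GtV (d : ℕ) (t : Fin d → ℕ) := Option (Σ i : Fin d, Fin (t i))

/-- Underlying edge relation of `G_t`: each `Hᵢ` is complete (via `fromRel`, which
only keeps distinct pairs), and the vertex `u = none` is joined to exactly one
vertex `vᵢ` (the one with index `0`) of each `Hᵢ`. -/
def gtRel (d : ℕ) (t : Fin d → ℕ) : GtV d t → GtV d t → Bool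
  | none, some ⟨_, j⟩ => j.val == 0
  | some ⟨i, _⟩, some ⟨i', _⟩ => i == i'
  | _, _ => false

/-- The graph `G_t`. -/
def Gt (d : ℕ) (t : Fin d → ℕ) : SimpleGraph (GtV d t) :=
  SimpleGraph.fromRel (fun x y => gtRel d t x y = true)

instance {d : ℕ} {t : Fin d → ℕ} : DecidableRel (Gt d t).Adj :=
  fun x y => decidable_of_iff _ (SimpleGraph.fromRel_adj _ x y).symm

/-! Call `{u}` and the `Hᵢ` the blocks of `G_t`. Distinct vertices of one block are adjacent, so
an independent set has at most `d + 1` vertices, while a large one has at least `δ + 1 = d + 1`: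
it meets every block exactly once. Every vertex of `Hᵢ` has degree at least `tᵢ - 1` and `u` has
degree `d`, so the degree sum is at least `d + ∑ (tᵢ - 1) = n - 1`, with equality for `u`
together with a vertex `≠ vᵢ` of each `Hᵢ`. -/

theorem Finset.sum_univ_le_sum_of_injOn {α β M : Type*} [Fintype β] [AddCommMonoid M]
    [PartialOrder M] [IsOrderedAddMonoid M] {s : Finset α} {F : α → β}
    (hF : Set.InjOn F s) (hcard : Fintype.card β ≤ s.card) {w : β → M} {f : α → M}
    (hwf : ∀ x ∈ s, w (F x) ≤ f x) : ∑ b, w b ≤ ∑ x ∈ s, f x := by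
  classical
  have himage : s.image F = Finset.univ :=
    Finset.eq_univ_of_card _ (le_antisymm (Finset.card_le_univ _)
      (Finset.card_image_of_injOn hF ▸ hcard))
  calc ∑ b, w b = ∑ x ∈ s, w (F x) := by rw [← himage, Finset.sum_image hF]
    _ ≤ ∑ x ∈ s, f x := Finset.sum_le_sum hwf

theorem IsIndep.injOn {V β : Type*} {G : SimpleGraph V} {I : Finset V} (hI : IsIndep G I)
    {F : V → β} (hF : ∀ ⦃x y⦄, x ≠ y → F x = F y → G.Adj x y) : Set.InjOn F I := by
  intro x hx y hy hxy
  by_contra hne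
  exact hI x hx y hy hne (hF hne hxy)

namespace Gt

variable {d : ℕ} {t : Fin d → ℕ}

@[simp]
theorem adj_none_some (i : Fin d) (j : Fin (t i)) :
    (Gt d t).Adj none (some ⟨i, j⟩) ↔ j.val = 0 := by
  simp [Gt, gtRel]

@[simp]
theorem adj_some_none (i : Fin d) (j : Fin (t i)) :
    (Gt d t).Adj (some ⟨i, j⟩) none ↔ j.val = 0 := by
  rw [SimpleGraph.adj_comm, adj_none_some]

@[simp]
theorem adj_some_some_self (i : Fin d) (j j' : Fin (t i)) :
    (Gt d t).Adj (some ⟨i, j⟩) (some ⟨i, j'⟩) ↔ j ≠ j' := by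
  simp [Gt, gtRel]

theorem not_adj_some_some_of_ne {i i' : Fin d} (h : i ≠ i') (j : Fin (t i)) (j' : Fin (t i')) :
    ¬ (Gt d t).Adj (some ⟨i, j⟩) (some ⟨i', j'⟩) := by
  simp [Gt, gtRel, h, Ne.symm h]

/-- The block of a vertex: `none` for `u`, `some i` for the vertices of `Hᵢ`. -/
abbrev block : GtV d t → Option (Fin d) := Option.map Sigma.fst

theorem adj_of_block_eq {x y : GtV d t} (hne : x ≠ y) (h : block x = block y) :
    (Gt d t).Adj x y := by
  match x, y with
  | none, none => exact absurd rfl hne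
  | some ⟨i, j⟩, some ⟨i', j'⟩ =>
    obtain rfl : i = i' := Option.some.inj h
    simpa using hne

theorem degree_eq_sum_ite (x : GtV d t) :
    (Gt d t).degree x = ∑ y, if (Gt d t).Adj x y then 1 else 0 := by
  rw [← SimpleGraph.card_neighborFinset_eq_degree, SimpleGraph.neighborFinset_eq_filter,
    Finset.card_filter]

theorem degree_none (ht : ∀ i, 0 < t i) : (Gt d t).degree none = d := by
  rw [degree_eq_sum_ite, Fintype.sum_option, Fintype.sum_sigma]
  have hone : ∀ i, ∑ j : Fin (t i), (if j.val = 0 then 1 else 0) = 1 := fun i => by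
    rw [Finset.sum_boole, Nat.cast_id, Finset.card_eq_one]
    exact ⟨⟨0, ht i⟩, by ext; simp [Fin.ext_iff]⟩
  simp [hone]

theorem degree_some (i : Fin d) (j : Fin (t i)) :
    (Gt d t).degree (some ⟨i, j⟩) = if j.val = 0 then t i else t i - 1 := by
  rw [degree_eq_sum_ite, Fintype.sum_option, Fintype.sum_sigma,
    Finset.sum_eq_single i (fun i' _ hi' => by simp [not_adj_some_some_of_ne (Ne.symm hi')])
      (by simp)]
  have hcard : ∑ j', (if j = j' then 0 else 1) = t i - 1 := by
    simp [Finset.sum_ite, Finset.filter_ne]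
  have := j.pos
  simp only [adj_some_none, adj_some_some_self, ne_eq, ite_not, hcard]
  split_ifs <;> omega

theorem le_degree (ht : ∀ i, d + 1 ≤ t i) (x : GtV d t) : d ≤ (Gt d t).degree x := by
  match x with
  | none => rw [degree_none fun i => Nat.zero_lt_of_lt (ht i)]
  | some ⟨i, j⟩ => rw [degree_some]; have := ht i; split_ifs <;> omega

/-- The degree of a vertex of block `o` other than `vᵢ`, the least degree in that block. -/
def blockWeight (t : Fin d → ℕ) : Option (Fin d) → ℕ
  | none => d
  | some i => t i - 1

theorem blockWeight_block_le_degree (ht : ∀ i, 0 < t i) (x : GtV d t) :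
    blockWeight t (block x) ≤ (Gt d t).degree x := by
  match x with
  | none => simp [blockWeight, degree_none ht]
  | some ⟨i, j⟩ => rw [degree_some]; split_ifs <;> simp [blockWeight]

theorem sum_blockWeight (ht : ∀ i, 0 < t i) : ∑ o, blockWeight t o = ∑ i, t i := by
  have hsplit : ∑ i, t i = ∑ i, (t i - 1) + ∑ _i : Fin d, 1 := by
    rw [← Finset.sum_add_distrib]
    exact Finset.sum_congr rfl fun i _ => by have := ht i; omega
  simp [Fintype.sum_option, blockWeight, hsplit, add_comm]

theorem sum_le_sum_degree_of_isLarge (ht : ∀ i, d + 1 ≤ t i) {I : Finset (GtV d t)}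
    (hI : IsIndep (Gt d t) I) (hL : IsLarge (Gt d t) I) :
    ∑ i, t i ≤ ∑ x ∈ I, (Gt d t).degree x := by
  have hpos : ∀ i, 0 < t i := fun i => Nat.zero_lt_of_lt (ht i)
  obtain ⟨v, -, hv⟩ := hL
  have hcard : Fintype.card (Option (Fin d)) ≤ I.card := by
    have := le_degree ht v
    simp only [Fintype.card_option, Fintype.card_fin]
    omega
  rw [← sum_blockWeight hpos]
  exact Finset.sum_univ_le_sum_of_injOn (hI.injOn fun _ _ => adj_of_block_eq) hcard
    fun x _ => blockWeight_block_le_degree hpos x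

/-- `u`, and in `Hᵢ` the vertex `1 ≠ vᵢ`. -/
def blockRep (ht : ∀ i, 1 < t i) : Option (Fin d) → GtV d t :=
  Option.map fun i => ⟨i, ⟨1, ht i⟩⟩

theorem blockRep_injective (ht : ∀ i, 1 < t i) : Function.Injective (blockRep ht) :=
  Function.LeftInverse.injective (g := block) fun o => by cases o <;> rfl

theorem not_adj_blockRep (ht : ∀ i, 1 < t i) (o o' : Option (Fin d)) :
    ¬ (Gt d t).Adj (blockRep ht o) (blockRep ht o') := by
  match o, o' with
  | none, none => exact SimpleGraph.irrefl _
  | none, some _ | some _, none => simp [blockRep]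
  | some i, some i' =>
    by_cases h : i = i'
    · subst h; simp [blockRep]
    · exact not_adj_some_some_of_ne h _ _

theorem degree_blockRep (ht : ∀ i, 1 < t i) (o : Option (Fin d)) :
    (Gt d t).degree (blockRep ht o) = blockWeight t o := by
  match o with
  | none => exact degree_none fun i => Nat.zero_lt_of_lt (ht i)
  | some i => exact (degree_some i ⟨1, ht i⟩).trans (by simp [blockWeight])

theorem exists_isLarge_sum_degree_eq (ht : ∀ i, d + 1 ≤ t i) :
    ∃ I : Finset (GtV d t), IsIndep (Gt d t) I ∧ IsLarge (Gt d t) I ∧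
      ∑ x ∈ I, (Gt d t).degree x = ∑ i, t i := by
  have ht1 : ∀ i, 1 < t i := fun i => by have := ht i; have := i.pos; omega
  refine ⟨Finset.univ.map ⟨blockRep ht1, blockRep_injective ht1⟩, ?_, ?_, ?_⟩
  · simp only [IsIndep, Finset.mem_map, Finset.mem_univ, true_and, Function.Embedding.coeFn_mk]
    rintro _ ⟨o, rfl⟩ _ ⟨o', rfl⟩ -
    exact not_adj_blockRep ht1 o o'
  · refine ⟨blockRep ht1 none, by simp, ?_⟩
    simp [degree_blockRep, blockWeight]
  · simp [degree_blockRep, sum_blockWeight fun i => Nat.zero_lt_of_lt (ht1 i)]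

end Gt

theorem stmt11_general (n d : ℕ) (t : Fin d → ℕ)
    (hsum : ∑ i, t i = n - 1) (ht : ∀ i, d + 1 ≤ t i) :
    (∀ I : Finset (GtV d t), IsIndep (Gt d t) I → IsLarge (Gt d t) I →
      n - 1 ≤ ∑ u ∈ I, (Gt d t).degree u) ∧
    (∃ I : Finset (GtV d t), IsIndep (Gt d t) I ∧ IsLarge (Gt d t) I ∧
      ∑ u ∈ I, (Gt d t).degree u = n - 1) :=
  hsum ▸ ⟨fun _ => Gt.sum_le_sum_degree_of_isLarge ht, Gt.exists_isLarge_sum_degree_eq ht⟩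

/-- Let `n, d` be positive integers with `d(d+1)+1 < n` and let
`t₁, …, t_d` be integers with `Σ tᵢ = n − 1` and each `tᵢ ≥ d + 1`. Then the graph
`G_t` satisfies `σ*(G_t) = n − 1`: every large independent set has degree sum
`≥ n − 1`, and some large independent set has degree sum exactly `n − 1`. -/
theorem stmt11 (n d : ℕ) (t : Fin d → ℕ) (hd : 0 < d) (hn : d * (d + 1) + 1 < n)
    (hsum : ∑ i, t i = n - 1) (ht : ∀ i, d + 1 ≤ t i) :
    (∀ I : Finset (GtV d t), IsIndep (Gt d t) I → IsLarge (Gt d t) I →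
      n - 1 ≤ ∑ u ∈ I, (Gt d t).degree u) ∧
    (∃ I : Finset (GtV d t), IsIndep (Gt d t) I ∧ IsLarge (Gt d t) I ∧
      ∑ u ∈ I, (Gt d t).degree u = n - 1) :=
  stmt11_general n d t hsum ht
end

section
/- For integers 3 ≤ s ≤ t with t ≥ 4, both H_{s,t} and H_{s,t}⁻ = H_{s,t} − ab admit a 2-proper partition with 3 parts, while α*(H_{s,t}) = α*(H_{s,t}⁻) = 2. -/
/-- A finite graph is 2-connected if it has more than 2 vertices and deleting any
set of fewer than 2 vertices leaves a connected graph. -/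
def TwoConnected {W : Type*} [Fintype W] [DecidableEq W] (G : SimpleGraph W) : Prop :=
  2 < Fintype.card W ∧ G.Connected ∧ ∀ v : W, (G.induce {u : W | u ≠ v}).Connected

/-- `P` is a 2-proper partition of `G`: a partition of the vertex set such that
every part induces a 2-connected subgraph of `G`. -/
def Is2ProperPartition {W : Type*} [Fintype W] [DecidableEq W] (G : SimpleGraph W)
    (P : Finset (Finset W)) : Prop :=
  (∀ p ∈ P, ∀ q ∈ P, p ≠ q → Disjoint p q) ∧
  P.sup id = Finset.univ ∧
  ∀ p ∈ P, TwoConnected (G.induce (↑p : Set W))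

/-- `I` is a light independent set: its degree sum is at most `n − 1`. -/
def IsLight {V : Type*} [Fintype V] (G : SimpleGraph V) [DecidableRel G.Adj]
    (I : Finset V) : Prop :=
  ∑ u ∈ I, G.degree u ≤ Fintype.card V - 1
open SimpleGraph Finset

lemma adj_iff {s t : ℕ} {w : Bool} {x y : HV s t} :
    (Hst s t w).Adj x y ↔ x ≠ y ∧ (hstRel w x y = true ∨ hstRel w y x = true) :=
  SimpleGraph.fromRel_adj _ x y

lemma s1inj {s t : ℕ} : Function.Injective (HV.s1 (s := s) (t := t)) := fun a b h => by
  simpa using h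

lemma s2inj {s t : ℕ} : Function.Injective (HV.s2 (s := s) (t := t)) := fun a b h => by
  simpa using h

lemma nbC1 {s t : ℕ} (w : Bool) : (Hst s t w).neighborFinset HV.c1 = {HV.a, HV.c2} := by
  ext v
  rw [SimpleGraph.mem_neighborFinset, adj_iff]
  cases v <;> simp [hstRel]

lemma nbC2 {s t : ℕ} (w : Bool) : (Hst s t w).neighborFinset HV.c2 = {HV.a, HV.c1} := by
  ext v
  rw [SimpleGraph.mem_neighborFinset, adj_iff]
  cases v <;> simp [hstRel]

lemma degC1 {s t : ℕ} (w : Bool) : (Hst s t w).degree HV.c1 = 2 := by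
  rw [SimpleGraph.degree, nbC1]; rfl

lemma degC2 {s t : ℕ} (w : Bool) : (Hst s t w).degree HV.c2 = 2 := by
  rw [SimpleGraph.degree, nbC2]; rfl

lemma nbS1 {s t : ℕ} (w : Bool) (i : Fin (s - 1)) :
    (Hst s t w).neighborFinset (HV.s1 i) =
      insert HV.a (insert HV.b ((Finset.univ.image HV.s1).erase (HV.s1 i))) := by
  ext v
  rw [SimpleGraph.mem_neighborFinset, adj_iff]
  cases v <;> simp [hstRel, s1inj.eq_iff, eq_comm, Ne]

lemma nbS2 {s t : ℕ} (w : Bool) (j : Fin (t - 1)) :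
    (Hst s t w).neighborFinset (HV.s2 j) =
      insert HV.a (insert HV.b ((Finset.univ.image HV.s2).erase (HV.s2 j))) := by
  ext v
  rw [SimpleGraph.mem_neighborFinset, adj_iff]
  cases v <;> simp [hstRel, s2inj.eq_iff, eq_comm, Ne]

lemma degS1 {s t : ℕ} (hs : 3 ≤ s) (w : Bool) (i : Fin (s - 1)) :
    (Hst s t w).degree (HV.s1 i) = s := by
  rw [SimpleGraph.degree, nbS1]
  rw [Finset.card_insert_of_notMem (by simp), Finset.card_insert_of_notMem (by simp),
    Finset.card_erase_of_mem (by simp), Finset.card_image_of_injective _ s1inj,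
    Finset.card_univ, Fintype.card_fin]
  omega

lemma degS2 {s t : ℕ} (ht : 4 ≤ t) (w : Bool) (j : Fin (t - 1)) :
    (Hst s t w).degree (HV.s2 j) = t := by
  rw [SimpleGraph.degree, nbS2]
  rw [Finset.card_insert_of_notMem (by simp), Finset.card_insert_of_notMem (by simp),
    Finset.card_erase_of_mem (by simp), Finset.card_image_of_injective _ s2inj,
    Finset.card_univ, Fintype.card_fin]
  omega

lemma cardHV (s t : ℕ) (hs : 3 ≤ s) (ht : 4 ≤ t) :
    Fintype.card (HV s t) = s + t + 2 := by
  have e : HV s t ≃ (Fin 4 ⊕ Fin (s - 1) ⊕ Fin (t - 1)) :=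
    { toFun := fun x => match x with
        | .a => .inl 0 | .b => .inl 1 | .c1 => .inl 2 | .c2 => .inl 3
        | .s1 i => .inr (.inl i) | .s2 j => .inr (.inr j)
      invFun := fun x => match x with
        | .inl 0 => .a | .inl 1 => .b | .inl 2 => .c1 | .inl 3 => .c2
        | .inr (.inl i) => .s1 i | .inr (.inr j) => .s2 j
      left_inv := fun x => by cases x <;> rfl
      right_inv := fun x => by
        rcases x with (k | (i | j))
        · fin_cases k <;> rfl
        · rfl
        · rfl }
  rw [Fintype.card_congr e]
  simp
  omega

lemma connected_of_complete {W : Type*} [Nonempty W] (G : SimpleGraph W)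
    (h : ∀ u v : W, u ≠ v → G.Adj u v) : G.Connected := by
  rw [SimpleGraph.connected_iff]
  refine ⟨fun u v => ?_, inferInstance⟩
  by_cases huv : u = v
  · exact huv ▸ SimpleGraph.Reachable.refl u
  · exact (h u v huv).reachable

lemma twoConnected_of_complete {W : Type*} [Fintype W] [DecidableEq W] (G : SimpleGraph W)
    (hc : 2 < Fintype.card W) (h : ∀ u v : W, u ≠ v → G.Adj u v) : TwoConnected G := by
  haveI : Nonempty W := Fintype.card_pos_iff.mp (by omega)
  haveI : Nontrivial W := Fintype.one_lt_card_iff_nontrivial.mp (by omega)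
  refine ⟨hc, connected_of_complete G h, fun v => ?_⟩
  haveI : Nonempty {u : W | u ≠ v} := by
    obtain ⟨u, hu⟩ := exists_ne v
    exact ⟨⟨u, hu⟩⟩
  exact connected_of_complete _ (fun x y hxy => by
    refine (SimpleGraph.comap_adj).mpr ?_
    exact h x y (fun hc' => hxy (Subtype.ext hc')))

lemma twoConnected_induce {W : Type*} [Fintype W] [DecidableEq W] (G : SimpleGraph W)
    (p : Finset W) (hc : 2 < p.card)
    (h : ∀ u ∈ p, ∀ v ∈ p, u ≠ v → G.Adj u v) : TwoConnected (G.induce (↑p : Set W)) := by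
  apply twoConnected_of_complete
  · simpa using hc
  · rintro ⟨u, hu⟩ ⟨v, hv⟩ huv
    refine (SimpleGraph.comap_adj).mpr ?_
    exact h u (by simpa using hu) v (by simpa using hv) (fun e => huv (Subtype.ext e))

lemma partition_exists (s t : ℕ) (hs : 3 ≤ s) (ht : 4 ≤ t) (w : Bool) :
    ∃ P : Finset (Finset (HV s t)), Is2ProperPartition (Hst s t w) P ∧ P.card = 3 := by
  set A : Finset (HV s t) := {HV.a, HV.c1, HV.c2} with hA
  set B : Finset (HV s t) := insert HV.b (Finset.univ.image HV.s1) with hB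
  set C : Finset (HV s t) := Finset.univ.image HV.s2 with hC
  have haB : HV.a ∉ B := by simp [hB]
  have haC : HV.a ∉ C := by simp [hC]
  have hbC : HV.b ∉ C := by simp [hC]
  have hbA : HV.b ∈ B := by simp [hB]
  refine ⟨{A, B, C}, ⟨?_, ?_, ?_⟩, ?_⟩
  · -- pairwise disjoint
    have dAB : Disjoint A B := by
      rw [Finset.disjoint_left]
      intro x hx
      simp only [hA, Finset.mem_insert, Finset.mem_singleton] at hx
      rcases hx with rfl | rfl | rfl <;> simp [hB]
    have dAC : Disjoint A C := by
      rw [Finset.disjoint_left]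
      intro x hx
      simp only [hA, Finset.mem_insert, Finset.mem_singleton] at hx
      rcases hx with rfl | rfl | rfl <;> simp [hC]
    have dBC : Disjoint B C := by
      rw [Finset.disjoint_left]
      intro x hx
      simp only [hB, Finset.mem_insert, Finset.mem_image] at hx
      rcases hx with rfl | ⟨i, _, rfl⟩ <;> simp [hC]
    intro p hp q hq hpq
    simp only [Finset.mem_insert, Finset.mem_singleton] at hp hq
    rcases hp with rfl | rfl | rfl <;> rcases hq with rfl | rfl | rfl <;>
      first
        | exact absurd rfl hpq
        | exact dAB | exact dAC | exact dBC
        | exact dAB.symm | exact dAC.symm | exact dBC.symm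
  · -- covers
    ext x
    simp only [Finset.sup_insert, Finset.sup_singleton, id, Finset.mem_union, Finset.mem_univ,
      iff_true]
    cases x <;> simp [hA, hB, hC]
  · -- two-connected parts
    intro p hp
    simp only [Finset.mem_insert, Finset.mem_singleton] at hp
    rcases hp with rfl | rfl | rfl
    · refine twoConnected_induce _ _ (by simp [hA]) ?_
      intro u hu v hv huv
      rw [adj_iff]
      refine ⟨huv, ?_⟩
      simp only [hA, Finset.mem_insert, Finset.mem_singleton] at hu hv
      rcases hu with rfl | rfl | rfl <;> rcases hv with rfl | rfl | rfl <;>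
        simp [hstRel] <;> exact absurd rfl huv
    · refine twoConnected_induce _ _ ?_ ?_
      · rw [Finset.card_insert_of_notMem (by simp),
          Finset.card_image_of_injective _ s1inj, Finset.card_univ, Fintype.card_fin]
        omega
      intro u hu v hv huv
      rw [adj_iff]
      refine ⟨huv, ?_⟩
      simp only [hB, Finset.mem_insert, Finset.mem_image, Finset.mem_univ, true_and] at hu hv
      rcases hu with rfl | ⟨i, rfl⟩ <;> rcases hv with rfl | ⟨j, rfl⟩ <;>
        simp [hstRel] <;> exact absurd rfl huv
    · refine twoConnected_induce _ _ ?_ ?_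
      · rw [Finset.card_image_of_injective _ s2inj, Finset.card_univ, Fintype.card_fin]
        omega
      intro u hu v hv huv
      rw [adj_iff]
      refine ⟨huv, ?_⟩
      simp only [hC, Finset.mem_image, Finset.mem_univ, true_and] at hu hv
      obtain ⟨i, rfl⟩ := hu
      obtain ⟨j, rfl⟩ := hv
      simp [hstRel]
  · -- card 3
    rw [Finset.card_insert_of_notMem, Finset.card_insert_of_notMem, Finset.card_singleton]
    · simp only [Finset.mem_singleton]
      intro h
      rw [h] at hbA
      exact hbC hbA
    · simp only [Finset.mem_insert, Finset.mem_singleton]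
      rintro (h | h)
      · exact haB (h ▸ (by simp [hA] : HV.a ∈ A))
      · exact haC (h ▸ (by simp [hA] : HV.a ∈ A))

lemma light_exists (s t : ℕ) (hs : 3 ≤ s) (ht : 4 ≤ t) (w : Bool) :
    ∃ I : Finset (HV s t), IsIndep (Hst s t w) I ∧ IsLight (Hst s t w) I ∧ I.card = 2 := by
  have hi : 0 < s - 1 := by omega
  refine ⟨{HV.c1, HV.s1 ⟨0, hi⟩}, ?_, ?_, by simp⟩
  · intro u hu v hv huv
    simp only [Finset.mem_insert, Finset.mem_singleton] at hu hv
    rcases hu with rfl | rfl <;> rcases hv with rfl | rfl <;>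
      first
        | exact absurd rfl huv
        | (rw [adj_iff]; rintro ⟨-, h | h⟩ <;> simp [hstRel] at h)
  · unfold IsLight
    rw [Finset.sum_insert (by simp), Finset.sum_singleton, degC1, degS1 hs,
      cardHV s t hs ht]
    omega

lemma not_light (s t : ℕ) (hs : 3 ≤ s) (ht : 4 ≤ t) (w : Bool) (I : Finset (HV s t))
    (i : Fin (s - 1)) (j : Fin (t - 1)) (c : HV s t) (hc : c = HV.c1 ∨ c = HV.c2)
    (h1 : c ∈ I) (h2 : HV.s1 i ∈ I) (h3 : HV.s2 j ∈ I) : ¬ IsLight (Hst s t w) I := by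
  intro hl
  unfold IsLight at hl
  have hsub : ({c, HV.s1 i, HV.s2 j} : Finset (HV s t)) ⊆ I := by
    intro x hx
    simp only [Finset.mem_insert, Finset.mem_singleton] at hx
    rcases hx with rfl | rfl | rfl <;> assumption
  have hdc : (Hst s t w).degree c = 2 := by
    rcases hc with rfl | rfl
    · exact degC1 w
    · exact degC2 w
  have hge : ∑ u ∈ ({c, HV.s1 i, HV.s2 j} : Finset (HV s t)), (Hst s t w).degree u ≤
      ∑ u ∈ I, (Hst s t w).degree u :=
    Finset.sum_le_sum_of_subset hsub
  rw [Finset.sum_insert (by rcases hc with rfl | rfl <;> simp),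
    Finset.sum_insert (by simp), Finset.sum_singleton, hdc, degS1 hs, degS2 ht,
    ] at hge
  rw [cardHV s t hs ht] at hl
  omega

set_option maxHeartbeats 1000000 in
lemma light_bound (s t : ℕ) (hs : 3 ≤ s) (ht : 4 ≤ t) (w : Bool) (I : Finset (HV s t))
    (hI : IsIndep (Hst s t w) I) (hL : IsLight (Hst s t w) I) : I.card ≤ 2 := by
  by_contra h
  push_neg at h
  obtain ⟨x, y, z, hx, hy, hz, hxy, hxz, hyz⟩ := Finset.two_lt_card_iff.mp h
  have axy := hI x hx y hy hxy
  have axz := hI x hx z hz hxz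
  have ayz := hI y hy z hz hyz
  rw [adj_iff] at axy axz ayz
  push_neg at axy axz ayz
  have axy' := axy hxy
  have axz' := axz hxz
  have ayz' := ayz hyz
  clear axy axz ayz
  rcases x with _ | _ | _ | _ | i | i <;> rcases y with _ | _ | _ | _ | i' | i' <;>
    rcases z with _ | _ | _ | _ | i'' | i'' <;>
    first
      | (simp_all [hstRel]; done)
      | exact not_light s t hs ht w I _ _ _ (Or.inl rfl) hx hy hz hL
      | exact not_light s t hs ht w I _ _ _ (Or.inl rfl) hx hz hy hL
      | exact not_light s t hs ht w I _ _ _ (Or.inl rfl) hy hx hz hL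
      | exact not_light s t hs ht w I _ _ _ (Or.inl rfl) hy hz hx hL
      | exact not_light s t hs ht w I _ _ _ (Or.inl rfl) hz hx hy hL
      | exact not_light s t hs ht w I _ _ _ (Or.inl rfl) hz hy hx hL
      | exact not_light s t hs ht w I _ _ _ (Or.inr rfl) hx hy hz hL
      | exact not_light s t hs ht w I _ _ _ (Or.inr rfl) hx hz hy hL
      | exact not_light s t hs ht w I _ _ _ (Or.inr rfl) hy hx hz hL
      | exact not_light s t hs ht w I _ _ _ (Or.inr rfl) hy hz hx hL
      | exact not_light s t hs ht w I _ _ _ (Or.inr rfl) hz hx hy hL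
      | exact not_light s t hs ht w I _ _ _ (Or.inr rfl) hz hy hx hL

/-- For integers `3 ≤ s ≤ t` with `t ≥ 4`, both `H_{s,t}` and
`H_{s,t}⁻ = H_{s,t} − ab` admit a 2-proper partition with 3 parts, while
`α*(H_{s,t}) = α*(H_{s,t}⁻) = 2`. -/
theorem stmt15 (s t : ℕ) (hs : 3 ≤ s) (hst : s ≤ t) (ht : 4 ≤ t) :
    (∃ P : Finset (Finset (HV s t)), Is2ProperPartition (Hst s t true) P ∧ P.card = 3) ∧
    (∃ P : Finset (Finset (HV s t)), Is2ProperPartition (Hst s t false) P ∧ P.card = 3) ∧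
    ((∃ I : Finset (HV s t), IsIndep (Hst s t true) I ∧ IsLight (Hst s t true) I ∧
        I.card = 2) ∧
      (∀ I : Finset (HV s t), IsIndep (Hst s t true) I → IsLight (Hst s t true) I →
        I.card ≤ 2)) ∧
    ((∃ I : Finset (HV s t), IsIndep (Hst s t false) I ∧ IsLight (Hst s t false) I ∧
        I.card = 2) ∧
      (∀ I : Finset (HV s t), IsIndep (Hst s t false) I → IsLight (Hst s t false) I →
        I.card ≤ 2)) :=
  ⟨partition_exists s t hs ht true, partition_exists s t hs ht false,
    ⟨light_exists s t hs ht true, fun I h1 h2 => light_bound s t hs ht true I h1 h2⟩,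
    ⟨light_exists s t hs ht false, fun I h1 h2 => light_bound s t hs ht false I h1 h2⟩⟩
end
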